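/- Let n ≥ 1, let (W, γ) be a Hermitian Clifford module for ℝ^{n+1}, and let a ∈ W with ‖a‖ = 1. Then for each choice of sign ±, the vector ζ_a^± ∈ ℝ^{n+2} satisfies (ζ_a^±)_{n+2} = 1 and η(ζ_a^±, ζ_a^±) ≤ 0; that is, ζ_a^± is a future-directed causal (non-spacelike) vector in Minkowski space. -/

import Mathlib

/-!
Minkowski space `ℝ^{n+1,1}` is modeled as `EuclideanSpace ℝ (Fin (n+1)) × ℝ`,
with the bilinear form `η(v,w) = Σ_j v_j w_j − v_{n+2} w_{n+2}`.
A Hermitian Clifford module for `ℝ^{n+1}` is a complex inner product space `W`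
with an `ℝ`-linear map `γ : ℝ^{n+1} →ₗ[ℝ] End_ℂ(W)` such that
`γ(v)² = −|v|²·Id` and each `γ(v)` is skew-Hermitian.
-/

/-- The Minkowski bilinear form on `ℝ^{n+1,1}`. -/
noncomputable def minkowski (n : ℕ) (v w : EuclideanSpace ℝ (Fin (n + 1)) × ℝ) : ℝ :=
  (inner ℝ v.1 w.1 : ℝ) - v.2 * w.2

/-- The vector `ζ_a^±` of Minkowski space associated to a spinor `a`:
its `j`-th spatial component is `∓i⟨γ(e_j)a, a⟩` (a real number) and its time
component is `‖a‖²`.  The sign `±` is encoded by `ε ∈ {1, -1}`. -/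
noncomputable def zetaVec (n : ℕ) {W : Type*} [NormedAddCommGroup W] [InnerProductSpace ℂ W]
    (γ : EuclideanSpace ℝ (Fin (n + 1)) →ₗ[ℝ] (W →ₗ[ℂ] W)) (ε : ℝ) (a : W) :
    EuclideanSpace ℝ (Fin (n + 1)) × ℝ :=
  ((WithLp.toLp 2 (fun j => (-(ε : ℂ) * Complex.I *
      (inner ℂ (γ (EuclideanSpace.single j (1 : ℝ)) a) a : ℂ)).re) :
      EuclideanSpace ℝ (Fin (n + 1))),
    ‖a‖ ^ 2)

/-!
The spatial part of `ζ_a^±` is `±` the Riesz representative of the real functional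
`v ↦ Im ⟪γ v a, a⟫`. The Clifford relation together with skewness gives `‖γ v ψ‖ = ‖v‖ ‖ψ‖`,
so by Cauchy–Schwarz this functional has norm at most `‖a‖²`, which is the time component.
-/

open scoped InnerProductSpace
open InnerProductSpace

section CliffordModule

variable {W : Type*} [NormedAddCommGroup W] [InnerProductSpace ℂ W]

theorem norm_sq_apply_of_skew_of_comp_self {f : W →ₗ[ℂ] W} {c : ℝ}
    (hskew : ∀ ψ φ, ⟪f ψ, φ⟫_ℂ = -⟪ψ, f φ⟫_ℂ)
    (hsq : f ∘ₗ f = -(c : ℂ) • LinearMap.id) (ψ : W) :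
    ‖f ψ‖ ^ 2 = c * ‖ψ‖ ^ 2 := by
  have hff : f (f ψ) = -(c : ℂ) • ψ := LinearMap.congr_fun hsq ψ
  rw [← inner_self_eq_norm_sq (𝕜 := ℂ), hskew, hff, inner_smul_right, inner_self_eq_norm_sq_to_K]
  simp [← Complex.ofReal_pow]

variable {E : Type*} [NormedAddCommGroup E] [NormedSpace ℝ E] {γ : E →ₗ[ℝ] W →ₗ[ℂ] W}

theorem norm_clifford_apply
    (hγsq : ∀ v, γ v ∘ₗ γ v = ((-(‖v‖ ^ 2 : ℝ) : ℂ)) • (LinearMap.id : W →ₗ[ℂ] W))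
    (hγskew : ∀ v (ψ φ : W), ⟪γ v ψ, φ⟫_ℂ = -⟪ψ, γ v φ⟫_ℂ) (v : E) (ψ : W) :
    ‖γ v ψ‖ = ‖v‖ * ‖ψ‖ := by
  have h := norm_sq_apply_of_skew_of_comp_self (hγskew v) (hγsq v) ψ
  rw [← mul_pow] at h
  exact (pow_left_inj₀ (norm_nonneg _) (by positivity) two_ne_zero).mp h

variable (γ) in
noncomputable def imInnerClifford (a : W) : E →ₗ[ℝ] ℝ where
  toFun v := (⟪γ v a, a⟫_ℂ).im
  map_add' v w := by rw [map_add, LinearMap.add_apply, inner_add_left, Complex.add_im]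
  map_smul' r v := by
    rw [map_smul, LinearMap.smul_apply, RCLike.real_smul_eq_coe_smul (K := ℂ), inner_smul_real_left]
    simp

theorem abs_imInnerClifford_le
    (hγsq : ∀ v, γ v ∘ₗ γ v = ((-(‖v‖ ^ 2 : ℝ) : ℂ)) • (LinearMap.id : W →ₗ[ℂ] W))
    (hγskew : ∀ v (ψ φ : W), ⟪γ v ψ, φ⟫_ℂ = -⟪ψ, γ v φ⟫_ℂ) (a : W) (v : E) :
    |imInnerClifford γ a v| ≤ ‖a‖ ^ 2 * ‖v‖ :=
  calc |(⟪γ v a, a⟫_ℂ).im| ≤ ‖⟪γ v a, a⟫_ℂ‖ := Complex.abs_im_le_norm _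
    _ ≤ ‖γ v a‖ * ‖a‖ := norm_inner_le_norm _ _
    _ = ‖a‖ ^ 2 * ‖v‖ := by rw [norm_clifford_apply hγsq hγskew]; ring

end CliffordModule

theorem EuclideanSpace.toDual_symm_apply {ι : Type*} [Fintype ι] [DecidableEq ι]
    (ℓ : StrongDual ℝ (EuclideanSpace ℝ ι)) (j : ι) :
    (toDual ℝ _).symm ℓ j = ℓ (EuclideanSpace.single j 1) := by
  rw [← InnerProductSpace.toDual_symm_apply, EuclideanSpace.inner_single_right]
  simp

section Zeta

variable {n : ℕ} {W : Type*} [NormedAddCommGroup W] [InnerProductSpace ℂ W]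
  {γ : EuclideanSpace ℝ (Fin (n + 1)) →ₗ[ℝ] (W →ₗ[ℂ] W)}

theorem zetaVec_fst (ε : ℝ) (a : W) :
    (zetaVec n γ ε a).1 = ε • (toDual ℝ _).symm (imInnerClifford γ a).toContinuousLinearMap := by
  ext j
  simp [zetaVec, EuclideanSpace.toDual_symm_apply, imInnerClifford]

theorem norm_zetaVec_fst_le
    (hγsq : ∀ v, γ v ∘ₗ γ v = ((-(‖v‖ ^ 2 : ℝ) : ℂ)) • (LinearMap.id : W →ₗ[ℂ] W))
    (hγskew : ∀ v (ψ φ : W), ⟪γ v ψ, φ⟫_ℂ = -⟪ψ, γ v φ⟫_ℂ) {ε : ℝ} (hε : |ε| ≤ 1) (a : W) :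
    ‖(zetaVec n γ ε a).1‖ ≤ ‖a‖ ^ 2 := by
  have hℓ : ‖(imInnerClifford γ a).toContinuousLinearMap‖ ≤ ‖a‖ ^ 2 :=
    ContinuousLinearMap.opNorm_le_bound _ (by positivity) fun v =>
      abs_imInnerClifford_le hγsq hγskew a v
  rw [zetaVec_fst, norm_smul, LinearIsometryEquiv.norm_map, Real.norm_eq_abs]
  calc |ε| * _ ≤ 1 * ‖a‖ ^ 2 := by gcongr
    _ = ‖a‖ ^ 2 := one_mul _

end Zeta

theorem minkowski_self (n : ℕ) (v : EuclideanSpace ℝ (Fin (n + 1)) × ℝ) :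
    minkowski n v v = ‖v.1‖ ^ 2 - v.2 ^ 2 := by
  rw [minkowski, real_inner_self_eq_norm_sq, sq v.2]

theorem zetaVec_causal_general (n : ℕ)
    (W : Type*) [NormedAddCommGroup W] [InnerProductSpace ℂ W]
    (γ : EuclideanSpace ℝ (Fin (n + 1)) →ₗ[ℝ] (W →ₗ[ℂ] W))
    (hγsq : ∀ v : EuclideanSpace ℝ (Fin (n + 1)),
      γ v ∘ₗ γ v = ((-(‖v‖ ^ 2 : ℝ) : ℂ)) • (LinearMap.id : W →ₗ[ℂ] W))
    (hγskew : ∀ (v : EuclideanSpace ℝ (Fin (n + 1))) (ψ φ : W),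
      (inner ℂ (γ v ψ) φ : ℂ) = -(inner ℂ ψ (γ v φ) : ℂ))
    (a : W) (ha : ‖a‖ = 1) (ε : ℝ) (hε : ε = 1 ∨ ε = -1) :
    (zetaVec n γ ε a).2 = 1 ∧
      minkowski n (zetaVec n γ ε a) (zetaVec n γ ε a) ≤ 0 := by
  have htime : (zetaVec n γ ε a).2 = 1 := by simp [zetaVec, ha]
  have hε' : |ε| ≤ 1 := by rcases hε with rfl | rfl <;> simp
  have hspace := norm_zetaVec_fst_le hγsq hγskew hε' a
  rw [ha, one_pow] at hspace
  refine ⟨htime, ?_⟩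
  rw [minkowski_self, htime]
  nlinarith [norm_nonneg (zetaVec n γ ε a).1]

/-- For a unit spinor `a` and each choice of sign, the vector `ζ_a^±` has time
component `1` and satisfies `η(ζ_a^±, ζ_a^±) ≤ 0`; i.e. it is a future-directed
causal (non-spacelike) vector in Minkowski space. -/
theorem zetaVec_causal (n : ℕ) (hn : 1 ≤ n)
    (W : Type*) [NormedAddCommGroup W] [InnerProductSpace ℂ W] [FiniteDimensional ℂ W]
    (γ : EuclideanSpace ℝ (Fin (n + 1)) →ₗ[ℝ] (W →ₗ[ℂ] W))
    (hγsq : ∀ v : EuclideanSpace ℝ (Fin (n + 1)),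
      γ v ∘ₗ γ v = ((-(‖v‖ ^ 2 : ℝ) : ℂ)) • (LinearMap.id : W →ₗ[ℂ] W))
    (hγskew : ∀ (v : EuclideanSpace ℝ (Fin (n + 1))) (ψ φ : W),
      (inner ℂ (γ v ψ) φ : ℂ) = -(inner ℂ ψ (γ v φ) : ℂ))
    (a : W) (ha : ‖a‖ = 1) (ε : ℝ) (hε : ε = 1 ∨ ε = -1) :
    (zetaVec n γ ε a).2 = 1 ∧
      minkowski n (zetaVec n γ ε a) (zetaVec n γ ε a) ≤ 0 :=
  zetaVec_causal_general n W γ hγsq hγskew a ha ε hε
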